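/- The Margolis homology of B₂ is concentrated in length 0: for each r ∈ {0,1,2} and each λ > 0, if x ∈ B₂ is a linear combination of monomials of length exactly λ and Q_r x = 0, then x = Q_r y for some y ∈ B₂ that is a linear combination of monomials of length exactly λ + 1. -/

import Mathlib

/-- A monomial of `B n = F_p[ζ₁, ζ₂, …] ⊗ Λ(τ̄_{n+1}, τ̄_{n+2}, …)`:
`e k` is the exponent of `ζ_k` (with `e 0 = 0`, i.e. no `ζ₀`), and
`t` is the set of indices `m` of the exterior generators `τ̄_m` occurring
(all of which satisfy `m ≥ n + 1`). -/
structure Mono (n : ℕ) where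
  e : ℕ →₀ ℕ
  t : Finset ℕ
  he : e 0 = 0
  ht : ∀ m ∈ t, n + 1 ≤ m

/-- `B p n` models `A//E(n)_* = F_p[ζ₁, ζ₂, …] ⊗ Λ(τ̄_{n+1}, …)` as the free
`F_p`-vector space on its monomial basis. -/
abbrev B (p n : ℕ) : Type := Mono n →₀ ZMod p

namespace Mono

variable {n : ℕ}

/-- Internal (topological) degree of a monomial: `deg ζ_k = 2(p^k − 1)`,
`deg τ̄_m = 2p^m − 1`. -/
def deg (p : ℕ) (x : Mono n) : ℕ :=
  x.e.sum (fun k a => a * (2 * (p ^ k - 1))) + ∑ m ∈ x.t, (2 * p ^ m - 1)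

/-- Weight of a monomial: `wt ζ_k = wt τ̄_k = p^k`, extended additively. -/
def wt (p : ℕ) (x : Mono n) : ℕ :=
  x.e.sum (fun k a => a * p ^ k) + ∑ m ∈ x.t, p ^ m

/-- Length of a monomial: the number of exterior factors `τ̄_m` occurring in it. -/
def len (x : Mono n) : ℕ := x.t.card

end Mono

/-- The monomial obtained from `x` by the Milnor operation `Q_r` acting on the
exterior factor `τ̄_m`: remove `τ̄_m` and multiply by `ζ_{m−r}^{p^r}`
(with the convention `ζ₀ = 1`, i.e. if `m ≤ r` nothing is added). -/
noncomputable def Qtarget (p r : ℕ) {n : ℕ} (x : Mono n) (m : ℕ) : Mono n where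
  e := if r < m then x.e + Finsupp.single (m - r) (p ^ r) else x.e
  t := x.t.erase m
  he := by
    by_cases h : r < m
    · simp [if_pos h, Finsupp.single_apply, x.he, Nat.sub_ne_zero_of_lt h]
    · simp [if_neg h, x.he]
  ht := fun m' hm' => x.ht m' (Finset.mem_of_mem_erase hm')

/-- Value of the Milnor operation `Q_r` on a basis monomial: the signed sum over the
exterior factors `τ̄_m` of `x`, the sign being the Koszul sign `(−1)^{#{m' ∈ t, m' < m}}`. -/
noncomputable def Qmono (p r : ℕ) {n : ℕ} (x : Mono n) : B p n :=
  ∑ m ∈ x.t, ((-1 : ZMod p) ^ ((x.t.filter (fun m' => m' < m)).card)) •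
    Finsupp.single (Qtarget p r x m) (1 : ZMod p)

/-- The Milnor operation `Q_r : B_n → B_n`, the unique graded derivation with
`Q_r ζ_k = 0` and `Q_r τ̄_m = ζ_{m−r}^{p^r}`. -/
noncomputable def Qop (p n r : ℕ) : B p n →ₗ[ZMod p] B p n :=
  Finsupp.lsum (ZMod p) fun x => LinearMap.toSpanSingleton (ZMod p) (B p n) (Qmono p r x)

/-- The span of the set of monomials satisfying a predicate `P`. -/
noncomputable def monSpan (p n : ℕ) (P : Mono n → Prop) : Submodule (ZMod p) (B p n) :=
  Submodule.span (ZMod p) ((fun x => Finsupp.single x (1 : ZMod p)) '' {x | P x})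

/-!
`Q_r` pairs each exterior generator `τ̄_m` with the polynomial factor `ζ_{m-r}^{p^r}`, and
for `r ≤ n` these factors are distinct and nonconstant, so `B n` with `Q_r` is a Koszul-type
complex. A contracting homotopy `H` on positive length is obtained by looking at the least
index `M` at which a monomial contains `τ̄_M` or `ζ_{M-r}^{p^r}`: `H` trades `ζ_{M-r}^{p^r}`
for `τ̄_M` (and kills the monomial if `τ̄_M` is already there). Then `Q_r H + H Q_r = id` on
monomials of positive length: the term of `Q_r` at `M` gives back the monomial, while the
terms at the other indices cancel in pairs because `H` and the other terms of `Q_r` commute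
up to the Koszul sign. Hence every cycle `x` of positive length is `Q_r (H x)`.
-/

namespace Mono

variable {n : ℕ}

lemma ext' {x y : Mono n} (he : x.e = y.e) (ht : x.t = y.t) : x = y := by
  cases x; cases y; cases he; cases ht; rfl

/-- `x` contains `τ̄_m` or `ζ_{m-r}^{p^r}`, one of the two factors paired by `Q_r`. -/
def Active (p r : ℕ) (x : Mono n) (m : ℕ) : Prop :=
  n + 1 ≤ m ∧ (m ∈ x.t ∨ p ^ r ≤ x.e (m - r))

end Mono

/-- The `if` only preserves the invariant of `Mono`: `Htarget` is used at active indices. -/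
noncomputable def Htarget (p r : ℕ) {n : ℕ} (x : Mono n) (m : ℕ) : Mono n where
  e := x.e - Finsupp.single (m - r) (p ^ r)
  t := if n + 1 ≤ m then insert m x.t else x.t
  he := by rw [Finsupp.tsub_apply, x.he, Nat.zero_sub]
  ht := by
    intro m' hm'
    split_ifs at hm' with hm
    · rcases Finset.mem_insert.1 hm' with rfl | hm'
      · exact hm
      · exact x.ht m' hm'
    · exact x.ht m' hm'

open Classical in
noncomputable def Hmono (p r : ℕ) {n : ℕ} (x : Mono n) : B p n :=
  if h : ∃ m, x.Active p r m then
    if Nat.find h ∈ x.t then 0 else Finsupp.single (Htarget p r x (Nat.find h)) 1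
  else 0

noncomputable def Hop (p n r : ℕ) : B p n →ₗ[ZMod p] B p n :=
  Finsupp.lsum (ZMod p) fun x => LinearMap.toSpanSingleton (ZMod p) (B p n) (Hmono p r x)

section Homotopy

open Finset

variable {p r n : ℕ}

lemma monSpan_mono {P Q : Mono n → Prop} (h : ∀ y, P y → Q y) :
    monSpan p n P ≤ monSpan p n Q :=
  Submodule.span_mono (Set.image_mono h)

lemma Qop_single (x : Mono n) : Qop p n r (Finsupp.single x 1) = Qmono p r x := by
  simp [Qop]

lemma Hop_single (x : Mono n) : Hop p n r (Finsupp.single x 1) = Hmono p r x := by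
  simp [Hop]

lemma Qtarget_e (hr : r ≤ n) {x : Mono n} {m : ℕ} (hm : n + 1 ≤ m) :
    (Qtarget p r x m).e = x.e + Finsupp.single (m - r) (p ^ r) :=
  if_pos (by omega)

lemma Qtarget_t (x : Mono n) (m : ℕ) : (Qtarget p r x m).t = x.t.erase m := rfl

lemma Htarget_e (x : Mono n) (m : ℕ) :
    (Htarget p r x m).e = x.e - Finsupp.single (m - r) (p ^ r) := rfl

lemma Htarget_t {x : Mono n} {m : ℕ} (hm : n + 1 ≤ m) :
    (Htarget p r x m).t = insert m x.t :=
  if_pos hm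

lemma Htarget_Qtarget_self (hr : r ≤ n) {x : Mono n} {m : ℕ} (hm : m ∈ x.t) :
    Htarget p r (Qtarget p r x m) m = x :=
  Mono.ext' (by rw [Htarget_e, Qtarget_e hr (x.ht m hm), add_tsub_cancel_right])
    (by rw [Htarget_t (x.ht m hm), Qtarget_t, insert_erase hm])

lemma Qtarget_Htarget_self (hr : r ≤ n) {x : Mono n} {m : ℕ} (hm : n + 1 ≤ m)
    (hmt : m ∉ x.t) (he : p ^ r ≤ x.e (m - r)) :
    Qtarget p r (Htarget p r x m) m = x :=
  Mono.ext' (by rw [Qtarget_e hr hm, Htarget_e, tsub_add_cancel_of_le (Finsupp.single_le_iff.2 he)])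
    (by rw [Qtarget_t, Htarget_t hm, erase_insert hmt])

lemma Qtarget_Htarget_comm (hr : r ≤ n) {x : Mono n} {M m : ℕ} (hM : n + 1 ≤ M)
    (hm : n + 1 ≤ m) (hne : M ≠ m) (he : p ^ r ≤ x.e (M - r)) :
    Qtarget p r (Htarget p r x M) m = Htarget p r (Qtarget p r x m) M :=
  Mono.ext'
    (by rw [Qtarget_e hr hm, Htarget_e, Htarget_e, Qtarget_e hr hm,
      tsub_add_eq_add_tsub (Finsupp.single_le_iff.2 he)])
    (by rw [Qtarget_t, Htarget_t hM, Htarget_t hM, Qtarget_t, erase_insert_of_ne hne])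

namespace Mono

lemma active_of_mem {x : Mono n} {m : ℕ} (hm : m ∈ x.t) : x.Active p r m :=
  ⟨x.ht m hm, Or.inl hm⟩

lemma active_Qtarget (hr : r ≤ n) {x : Mono n} {M m : ℕ} (hM : x.Active p r M)
    (hm : m ∈ x.t) : (Qtarget p r x m).Active p r M := by
  refine ⟨hM.1, ?_⟩
  rw [Qtarget_t, Qtarget_e hr (x.ht m hm), Finsupp.add_apply, mem_erase]
  by_cases hMm : M = m
  · subst hMm
    exact Or.inr (by simp)
  · exact hM.2.imp (fun h => ⟨hMm, h⟩) (fun h => le_add_right h)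

lemma Active.of_Qtarget (hr : r ≤ n) {x : Mono n} {m m' : ℕ} (hm : m ∈ x.t)
    (h : (Qtarget p r x m).Active p r m') : m' = m ∨ x.Active p r m' := by
  obtain ⟨hm', hmem | hle⟩ := h
  · exact Or.inr (active_of_mem (mem_of_mem_erase hmem))
  · rw [Qtarget_e hr (x.ht m hm), Finsupp.add_apply, Finsupp.single_apply] at hle
    by_cases hmm' : m - r = m' - r
    · exact Or.inl (by omega)
    · rw [if_neg hmm', add_zero] at hle
      exact Or.inr ⟨hm', Or.inr hle⟩

lemma isLeast_active_Qtarget (hr : r ≤ n) {x : Mono n} {M m : ℕ}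
    (hM : IsLeast {m | x.Active p r m} M) (hm : m ∈ x.t) :
    IsLeast {m' | (Qtarget p r x m).Active p r m'} M := by
  refine ⟨active_Qtarget hr hM.1 hm, fun m' hm' => ?_⟩
  rcases Active.of_Qtarget hr hm hm' with rfl | h
  · exact hM.2 (active_of_mem hm)
  · exact hM.2 h

lemma exists_isLeast_active {x : Mono n} (hx : x.t.Nonempty) :
    ∃ M, IsLeast {m | x.Active p r m} M := by
  classical
  obtain ⟨m, hm⟩ := hx
  exact ⟨_, Nat.isLeast_find ⟨m, active_of_mem hm⟩⟩

end Mono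

lemma Hmono_eq_of_isLeast {x : Mono n} {M : ℕ} (hM : IsLeast {m | x.Active p r m} M) :
    Hmono p r x = if M ∈ x.t then 0 else Finsupp.single (Htarget p r x M) 1 := by
  classical
  have h : ∃ m, x.Active p r m := ⟨M, hM.1⟩
  rw [Hmono, dif_pos h, (Nat.isLeast_find h).unique hM]

lemma Hmono_mem_monSpan (x : Mono n) :
    Hmono p r x ∈ monSpan p n (fun y => y.len = x.len + 1) := by
  classical
  unfold Hmono
  split_ifs with h hmem
  · exact zero_mem _
  · refine Submodule.subset_span ⟨_, ?_, rfl⟩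
    rw [Set.mem_ofPred_eq, Mono.len, Htarget_t (Nat.find_spec h).1,
      card_insert_of_notMem hmem, Mono.len]
  · exact zero_mem _

lemma Hop_Qmono (x : Mono n) :
    Hop p n r (Qmono p r x) = ∑ m ∈ x.t,
      (-1 : ZMod p) ^ #{m' ∈ x.t | m' < m} • Hmono p r (Qtarget p r x m) := by
  simp only [Qmono, map_sum, map_smul, Hop_single]

/-- The case `τ̄_M ∈ x`: only the term of `Q_r x` at `M` survives `H`. -/
lemma Hop_Qmono_of_mem (hr : r ≤ n) {x : Mono n} {M : ℕ}
    (hM : IsLeast {m | x.Active p r m} M) (hMt : M ∈ x.t) :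
    Hop p n r (Qmono p r x) = Finsupp.single x 1 := by
  have hQM (m) (hm : m ∈ x.t) := Hmono_eq_of_isLeast (Mono.isLeast_active_Qtarget hr hM hm)
  rw [Hop_Qmono, sum_eq_single_of_mem M hMt]
  · have hnone : #{m' ∈ x.t | m' < M} = 0 :=
      card_eq_zero.2 <| filter_eq_empty_iff.2 fun m hm => not_lt.2 (hM.2 (Mono.active_of_mem hm))
    rw [hQM M hMt, Qtarget_t, if_neg (notMem_erase M x.t), Htarget_Qtarget_self hr hMt, hnone,
      pow_zero, one_smul]
  · intro m hm hne
    rw [hQM m hm, Qtarget_t, if_pos (mem_erase.2 ⟨hne.symm, hMt⟩), smul_zero]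

/-- The case `τ̄_M ∉ x`: the terms of `Q_r (H x)` away from `M` cancel those of `H (Q_r x)`. -/
lemma Qmono_Htarget_add_Hop_Qmono (hr : r ≤ n) {x : Mono n} {M : ℕ}
    (hM : IsLeast {m | x.Active p r m} M) (hMt : M ∉ x.t) :
    Qmono p r (Htarget p r x M) + Hop p n r (Qmono p r x) = Finsupp.single x 1 := by
  have hM3 : n + 1 ≤ M := hM.1.1
  have he : p ^ r ≤ x.e (M - r) := hM.1.2.resolve_left hMt
  have hlt (m) (hm : m ∈ x.t) : M < m :=
    lt_of_le_of_ne (hM.2 (Mono.active_of_mem hm)) fun h => hMt (h ▸ hm)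
  have hnone : #{m' ∈ insert M x.t | m' < M} = 0 :=
    card_eq_zero.2 <| filter_eq_empty_iff.2 fun m hm => by
      rcases mem_insert.1 hm with rfl | hm
      · exact lt_irrefl m
      · exact (hlt m hm).asymm
  have hcancel : ∀ m ∈ x.t,
      (-1 : ZMod p) ^ #{m' ∈ insert M x.t | m' < m} •
          Finsupp.single (Qtarget p r (Htarget p r x M) m) 1 +
        (-1 : ZMod p) ^ #{m' ∈ x.t | m' < m} • Hmono p r (Qtarget p r x m) = 0 := by
    intro m hm
    have hsign : #{m' ∈ insert M x.t | m' < m} = #{m' ∈ x.t | m' < m} + 1 := by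
      rw [filter_insert, if_pos (hlt m hm),
        card_insert_of_notMem fun h => hMt (mem_of_mem_filter M h)]
    rw [Hmono_eq_of_isLeast (Mono.isLeast_active_Qtarget hr hM hm), Qtarget_t,
      if_neg fun h => hMt (mem_of_mem_erase h),
      Qtarget_Htarget_comm hr hM3 (x.ht m hm) (hlt m hm).ne he, hsign, pow_succ, mul_neg_one,
      neg_smul, neg_add_cancel]
  rw [Qmono, Htarget_t hM3, sum_insert hMt, hnone, pow_zero, one_smul,
    Qtarget_Htarget_self hr hM3 hMt he, Hop_Qmono, add_assoc, ← sum_add_distrib,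
    sum_eq_zero hcancel, add_zero]

lemma Qop_Hmono_add_Hop_Qmono (hr : r ≤ n) {x : Mono n} (hx : 0 < x.len) :
    Qop p n r (Hmono p r x) + Hop p n r (Qmono p r x) = Finsupp.single x 1 := by
  obtain ⟨M, hM⟩ := Mono.exists_isLeast_active (p := p) (r := r) (card_pos.1 hx)
  rw [Hmono_eq_of_isLeast hM]
  split_ifs with hMt
  · rw [map_zero, zero_add, Hop_Qmono_of_mem hr hM hMt]
  · rw [Qop_single, Qmono_Htarget_add_Hop_Qmono hr hM hMt]

lemma Qop_Hop_add_Hop_Qop (hr : r ≤ n) {x : B p n}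
    (hx : x ∈ monSpan p n (fun y => 0 < y.len)) :
    Qop p n r (Hop p n r x) + Hop p n r (Qop p n r x) = x := by
  have hbasis : Set.EqOn (Qop p n r ∘ₗ Hop p n r + Hop p n r ∘ₗ Qop p n r)
      (LinearMap.id : B p n →ₗ[ZMod p] B p n)
      ((fun y => Finsupp.single y (1 : ZMod p)) '' {y | 0 < y.len}) := by
    rintro _ ⟨y, hy, rfl⟩
    simpa [Hop_single, Qop_single] using Qop_Hmono_add_Hop_Qmono hr hy
  exact LinearMap.eqOn_span' hbasis hx

lemma Hop_mem_monSpan {k : ℕ} {x : B p n} (hx : x ∈ monSpan p n (fun y => y.len = k)) :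
    Hop p n r x ∈ monSpan p n (fun y => y.len = k + 1) := by
  refine (Submodule.map_span_le _ _ _).2 ?_ (Submodule.mem_map_of_mem hx)
  rintro _ ⟨y, rfl, rfl⟩
  rw [Hop_single]
  exact Hmono_mem_monSpan y

end Homotopy

theorem margolis_concentrated_in_length_zero_general (p : ℕ)
    (r : ℕ) (hr : r ≤ 2) (lam : ℕ) (hlam : 0 < lam)
    (x : B p 2) (hx : x ∈ monSpan p 2 (fun y => y.len = lam))
    (hcycle : Qop p 2 r x = 0) :
    ∃ y ∈ monSpan p 2 (fun z => z.len = lam + 1), Qop p 2 r y = x := by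
  have hpos : x ∈ monSpan p 2 (fun y => 0 < y.len) :=
    monSpan_mono (fun y (hy : y.len = lam) => hy ▸ hlam) hx
  refine ⟨Hop p 2 r x, Hop_mem_monSpan hx, ?_⟩
  simpa [hcycle] using Qop_Hop_add_Hop_Qop hr hpos

/-- The Margolis homology of `B₂` is concentrated in length `0`:
for `r = 0,1,2` and `λ > 0`, every `Q_r`-cycle which is a linear combination of
monomials of length exactly `λ` is `Q_r y` for some `y` which is a linear combination
of monomials of length exactly `λ + 1`. -/
theorem margolis_concentrated_in_length_zero (p : ℕ) (hp : p.Prime) (hodd : Odd p)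
    (r : ℕ) (hr : r ≤ 2) (lam : ℕ) (hlam : 0 < lam)
    (x : B p 2) (hx : x ∈ monSpan p 2 (fun y => y.len = lam))
    (hcycle : Qop p 2 r x = 0) :
    ∃ y ∈ monSpan p 2 (fun z => z.len = lam + 1), Qop p 2 r y = x :=
  margolis_concentrated_in_length_zero_general p r hr lam hlam x hx hcycle
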